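/- arXiv:1508.00249 — 3 statements merged into one kernel-verified Lean document; each statement's English description precedes it below -/
import Mathlib

section
/- Constrained risk inequality (Cai–Low, as used in the paper): Let (Ω,𝒜) be a measurable space, Θ a measurable parameter space, and θ ↦ P_θ a Markov kernel of probability distributions for an observation Z. Let Q : Θ → ℝ be a measurable functional and Q̂ : Ω → ℝ an estimator with E_θ(Q̂²) < ∞ for all θ; write B(θ) = E_θ(Q̂) − Q(θ) for its bias. Let π₀ and π₁ be prior probability measures supported on disjoint measurable subsets Θ₀ and Θ₁ of Θ, with μ_i = ∫ Q(θ) dπ_i(θ) and σ_i² = ∫ (Q(θ) − μ_i)² dπ_i(θ) finite for i = 0,1. Let γ₀ and γ₁ be the marginal densities of Z under priors π₀ and π₁ with respect to a common dominating σ-finite measure, with γ₀ > 0 a.e., and set χ = ( E_{γ₀}[ (γ₁/γ₀ − 1)² ] )^{1/2}, where E_{γ₀} is expectation under the π₀-marginal law of Z. If ∫ E_θ[(Q̂(Z) − Q(θ))²] dπ₀(θ) ≤ ε², then |∫ B(θ) dπ₁(θ) − ∫ B(θ) dπ₀(θ)| ≥ |μ₁ − μ₀| − (ε + σ₀)χ.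 -/
/-!
Write `m₀, m₁` for the marginal laws of `Z` under `π₀, π₁` and `r = γ₁ / γ₀`, so that
`m₁ = r • m₀` and `∫ (r - 1) dm₀ = 0`. The difference of the integrated biases is
`(∫ Q̂ dm₁ - ∫ Q̂ dm₀) - (μ₁ - μ₀)`, and `∫ Q̂ dm₁ - ∫ Q̂ dm₀ = ∫ (Q̂ - μ₀) (r - 1) dm₀`, which
Cauchy–Schwarz bounds by `‖Q̂ - μ₀‖_{L²(m₀)} χ`. On the joint law `π₀ ⊗ P` one has
`Q̂(z) - μ₀ = (Q̂(z) - Q(θ)) + (Q(θ) - μ₀)`, so Minkowski gives `‖Q̂ - μ₀‖_{L²(m₀)} ≤ ε + σ₀`.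
-/

open MeasureTheory Filter ProbabilityTheory

section CauchySchwarz

variable {α : Type*} [MeasurableSpace α] {μ : Measure α} {f g : α → ℝ}

theorem integral_mul_add_sq (hf : MemLp f 2 μ) (hg : MemLp g 2 μ) (t : ℝ) :
    ∫ x, (t * f x + g x) ^ 2 ∂μ
      = t ^ 2 * ∫ x, f x ^ 2 ∂μ + 2 * t * ∫ x, f x * g x ∂μ + ∫ x, g x ^ 2 ∂μ := by
  have hfg : Integrable (fun x => f x * g x) μ := hf.integrable_mul hg
  rw [integral_congr_ae (g := fun x => (t ^ 2 * f x ^ 2 + 2 * t * (f x * g x)) + g x ^ 2)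
      (ae_of_all _ fun x => by ring),
    integral_add ((hf.integrable_sq.const_mul _).fun_add (hfg.const_mul _)) hg.integrable_sq,
    integral_add (hf.integrable_sq.const_mul _) (hfg.const_mul _),
    integral_const_mul, integral_const_mul]

theorem abs_integral_mul_le_sqrt_mul_sqrt (hf : MemLp f 2 μ) (hg : MemLp g 2 μ) :
    |∫ x, f x * g x ∂μ| ≤ √(∫ x, f x ^ 2 ∂μ) * √(∫ x, g x ^ 2 ∂μ) := by
  -- `t ↦ ∫ (t f + g)²` is a nonnegative quadratic
  have hdiscr : discrim (∫ x, f x ^ 2 ∂μ) (2 * ∫ x, f x * g x ∂μ) (∫ x, g x ^ 2 ∂μ) ≤ 0 :=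
    discrim_le_zero fun t => by
      have := integral_mul_add_sq hf hg t ▸ integral_nonneg fun x => sq_nonneg (t * f x + g x)
      linarith
  have hA : 0 ≤ ∫ x, f x ^ 2 ∂μ := integral_nonneg fun x => sq_nonneg _
  rw [← Real.sqrt_mul hA, ← Real.sqrt_sq_eq_abs]
  exact Real.sqrt_le_sqrt (by rw [discrim] at hdiscr; nlinarith)

theorem sqrt_integral_add_sq_le (hf : MemLp f 2 μ) (hg : MemLp g 2 μ) :
    √(∫ x, (f x + g x) ^ 2 ∂μ) ≤ √(∫ x, f x ^ 2 ∂μ) + √(∫ x, g x ^ 2 ∂μ) := by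
  have hexpand := integral_mul_add_sq hf hg 1
  simp only [one_mul, one_pow] at hexpand
  have hCS := (abs_le.1 (abs_integral_mul_le_sqrt_mul_sqrt hf hg)).2
  have hA := Real.sq_sqrt (integral_nonneg (μ := μ) fun x => sq_nonneg (f x))
  have hB := Real.sq_sqrt (integral_nonneg (μ := μ) fun x => sq_nonneg (g x))
  refine Real.sqrt_le_iff.2 ⟨by positivity, ?_⟩
  rw [hexpand]
  nlinarith

end CauchySchwarz

section LikelihoodRatio

variable {α : Type*} [MeasurableSpace α] {μ : Measure α} {r f : α → ℝ}

theorem withDensity_ofReal_eq_withDensity_div {γ₀ γ₁ : α → ℝ} (h₀ : Measurable γ₀)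
    (h₁ : Measurable γ₁) (hpos : ∀ᵐ x ∂μ, 0 < γ₀ x) :
    μ.withDensity (fun x => ENNReal.ofReal (γ₁ x))
      = (μ.withDensity fun x => ENNReal.ofReal (γ₀ x)).withDensity
          fun x => ENNReal.ofReal (γ₁ x / γ₀ x) := by
  rw [← withDensity_mul _ h₀.ennreal_ofReal (by fun_prop)]
  refine withDensity_congr_ae ?_
  filter_upwards [hpos] with x hx
  rw [Pi.mul_apply, ← ENNReal.ofReal_mul hx.le, mul_div_cancel₀ _ hx.ne']

theorem ae_withDensity_ofReal_div_nonneg {γ₀ γ₁ : α → ℝ} (hpos : ∀ᵐ x ∂μ, 0 < γ₀ x)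
    (hnonneg : ∀ᵐ x ∂μ, 0 ≤ γ₁ x) :
    ∀ᵐ x ∂μ.withDensity (fun x => ENNReal.ofReal (γ₀ x)), 0 ≤ γ₁ x / γ₀ x := by
  refine (withDensity_absolutelyContinuous _ _).ae_le ?_
  filter_upwards [hpos, hnonneg] with x h₀ h₁
  exact div_nonneg h₁ h₀.le

theorem integral_withDensity_ofReal (hr : Measurable r) (hr0 : ∀ᵐ x ∂μ, 0 ≤ r x) (f : α → ℝ) :
    ∫ x, f x ∂μ.withDensity (fun x => ENNReal.ofReal (r x)) = ∫ x, r x * f x ∂μ := by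
  rw [integral_withDensity_eq_integral_toReal_smul hr.ennreal_ofReal
    (ae_of_all _ fun _ => ENNReal.ofReal_lt_top)]
  refine integral_congr_ae ?_
  filter_upwards [hr0] with x hx
  rw [ENNReal.toReal_ofReal hx, smul_eq_mul]

theorem integrable_withDensity_ofReal_iff (hr : Measurable r) (hr0 : ∀ᵐ x ∂μ, 0 ≤ r x) :
    Integrable f (μ.withDensity fun x => ENNReal.ofReal (r x))
      ↔ Integrable (fun x => r x * f x) μ := by
  rw [integrable_withDensity_iff_integrable_smul' hr.ennreal_ofReal
    (ae_of_all _ fun _ => ENNReal.ofReal_lt_top)]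
  refine integrable_congr ?_
  filter_upwards [hr0] with x hx
  rw [ENNReal.toReal_ofReal hx, smul_eq_mul]

theorem integrable_withDensity_ofReal_of_memLp [IsFiniteMeasure μ] (hr : Measurable r)
    (hr0 : ∀ᵐ x ∂μ, 0 ≤ r x) (hf : MemLp f 2 μ) (hr1 : MemLp (fun x => r x - 1) 2 μ) :
    Integrable f (μ.withDensity fun x => ENNReal.ofReal (r x)) := by
  rw [integrable_withDensity_ofReal_iff hr hr0]
  have h := (hr1.integrable_mul hf).add (hf.integrable one_le_two)
  refine h.congr (ae_of_all _ fun x => ?_)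
  simp only [Pi.add_apply, Pi.mul_apply]
  ring

theorem abs_integral_withDensity_ofReal_sub_integral_le [IsProbabilityMeasure μ]
    [IsProbabilityMeasure (μ.withDensity fun x => ENNReal.ofReal (r x))] (hr : Measurable r)
    (hr0 : ∀ᵐ x ∂μ, 0 ≤ r x) (hf : MemLp f 2 μ) (hr1 : MemLp (fun x => r x - 1) 2 μ) (c : ℝ) :
    |∫ x, f x ∂μ.withDensity (fun x => ENNReal.ofReal (r x)) - ∫ x, f x ∂μ|
      ≤ √(∫ x, (f x - c) ^ 2 ∂μ) * √(∫ x, (r x - 1) ^ 2 ∂μ) := by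
  have hfc : MemLp (fun x => f x - c) 2 μ := hf.sub (memLp_const c)
  have hr_int : Integrable r μ := by
    refine ((hr1.integrable one_le_two).add (integrable_const 1)).congr (ae_of_all _ fun x => ?_)
    simp only [Pi.add_apply, sub_add_cancel]
  have hmean : ∫ x, (r x - 1) ∂μ = 0 := by
    have h := integral_withDensity_ofReal hr hr0 (fun _ => (1 : ℝ))
    simp only [integral_const, probReal_univ, smul_eq_mul, mul_one] at h
    rw [integral_sub hr_int (integrable_const 1), ← h]
    simp
  have hdiff : ∫ x, f x ∂μ.withDensity (fun x => ENNReal.ofReal (r x)) - ∫ x, f x ∂μ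
      = ∫ x, (f x - c) * (r x - 1) ∂μ := by
    have hrf : Integrable (fun x => r x * f x) μ :=
      (integrable_withDensity_ofReal_iff hr hr0).1
        (integrable_withDensity_ofReal_of_memLp hr hr0 hf hr1)
    rw [integral_withDensity_ofReal hr hr0, ← integral_sub hrf (hf.integrable one_le_two)]
    calc ∫ x, (r x * f x - f x) ∂μ = ∫ x, ((f x - c) * (r x - 1) + c * (r x - 1)) ∂μ :=
          integral_congr_ae (ae_of_all _ fun x => by ring)
      _ = ∫ x, (f x - c) * (r x - 1) ∂μ := by
          have hprod : Integrable (fun x => (f x - c) * (r x - 1)) μ := hfc.integrable_mul hr1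
          rw [integral_add hprod ((hr1.integrable one_le_two).const_mul c),
            integral_const_mul, hmean, mul_zero, add_zero]
  rw [hdiff]
  exact abs_integral_mul_le_sqrt_mul_sqrt hfc hr1

variable {ν m₀ m₁ : Measure α} {γ₀ γ₁ : α → ℝ}

theorem integrable_of_eq_withDensity_ofReal [IsFiniteMeasure m₀] (h₀ : Measurable γ₀)
    (h₁ : Measurable γ₁) (hpos : ∀ᵐ x ∂ν, 0 < γ₀ x) (hnonneg : ∀ᵐ x ∂ν, 0 ≤ γ₁ x)
    (hm₀ : m₀ = ν.withDensity fun x => ENNReal.ofReal (γ₀ x))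
    (hm₁ : m₁ = ν.withDensity fun x => ENNReal.ofReal (γ₁ x))
    (hf : MemLp f 2 m₀) (hχ : MemLp (fun x => γ₁ x / γ₀ x - 1) 2 m₀) :
    Integrable f m₁ := by
  subst hm₀ hm₁
  rw [withDensity_ofReal_eq_withDensity_div h₀ h₁ hpos]
  exact integrable_withDensity_ofReal_of_memLp (h₁.div h₀)
    (ae_withDensity_ofReal_div_nonneg hpos hnonneg) hf hχ

theorem abs_integral_sub_integral_le_of_eq_withDensity_ofReal [IsProbabilityMeasure m₀]
    [IsProbabilityMeasure m₁] (h₀ : Measurable γ₀) (h₁ : Measurable γ₁)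
    (hpos : ∀ᵐ x ∂ν, 0 < γ₀ x) (hnonneg : ∀ᵐ x ∂ν, 0 ≤ γ₁ x)
    (hm₀ : m₀ = ν.withDensity fun x => ENNReal.ofReal (γ₀ x))
    (hm₁ : m₁ = ν.withDensity fun x => ENNReal.ofReal (γ₁ x))
    (hf : MemLp f 2 m₀) (hχ : MemLp (fun x => γ₁ x / γ₀ x - 1) 2 m₀) (c : ℝ) :
    |∫ x, f x ∂m₁ - ∫ x, f x ∂m₀|
      ≤ √(∫ x, (f x - c) ^ 2 ∂m₀) * √(∫ x, (γ₁ x / γ₀ x - 1) ^ 2 ∂m₀) := by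
  have hdens : m₁ = m₀.withDensity fun x => ENNReal.ofReal (γ₁ x / γ₀ x) := by
    rw [hm₁, hm₀]
    exact withDensity_ofReal_eq_withDensity_div h₀ h₁ hpos
  have : IsProbabilityMeasure (m₀.withDensity fun x => ENNReal.ofReal (γ₁ x / γ₀ x)) :=
    hdens ▸ ‹_›
  rw [hdens]
  exact abs_integral_withDensity_ofReal_sub_integral_le (h₁.div h₀)
    (hm₀ ▸ ae_withDensity_ofReal_div_nonneg hpos hnonneg) hf hχ c

end LikelihoodRatio

section Marginal

variable {Θ Ω : Type*} [MeasurableSpace Θ] [MeasurableSpace Ω] {κ : Kernel Θ Ω} {π : Measure Θ}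

theorem integrable_integral_of_integrable_comp {f : Ω → ℝ} (hf : Integrable f (κ ∘ₘ π)) :
    Integrable (fun θ => ∫ z, f z ∂κ θ) π := by
  rw [Measure.comp_eq_comp_const_apply] at hf
  simpa using hf.integral_comp

theorem integral_comp_eq_integral_integral {f : Ω → ℝ} (hf : Integrable f (κ ∘ₘ π)) :
    ∫ z, f z ∂(κ ∘ₘ π) = ∫ θ, ∫ z, f z ∂κ θ ∂π := by
  rw [Measure.comp_eq_comp_const_apply] at hf ⊢
  simpa using Kernel.integral_comp hf

theorem integral_integral_sub_eq_integral_comp_sub {f : Ω → ℝ} {g : Θ → ℝ}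
    (hf : Integrable f (κ ∘ₘ π)) (hg : Integrable g π) :
    ∫ θ, (∫ z, f z ∂κ θ - g θ) ∂π = ∫ z, f z ∂(κ ∘ₘ π) - ∫ θ, g θ ∂π := by
  rw [integral_sub (integrable_integral_of_integrable_comp hf) hg,
    integral_comp_eq_integral_integral hf]

variable [SFinite π]

theorem memLp_compProd_snd_iff [IsSFiniteKernel κ] {f : Ω → ℝ} {p : ENNReal}
    (hf : AEStronglyMeasurable f (κ ∘ₘ π)) :
    MemLp (fun x : Θ × Ω => f x.2) p (π ⊗ₘ κ) ↔ MemLp f p (κ ∘ₘ π) := by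
  rw [← Measure.snd_compProd] at hf ⊢
  exact (memLp_map_measure_iff hf measurable_snd.aemeasurable).symm

theorem integral_compProd_snd [IsSFiniteKernel κ] {f : Ω → ℝ}
    (hf : AEStronglyMeasurable f (κ ∘ₘ π)) :
    ∫ x, f x.2 ∂(π ⊗ₘ κ) = ∫ z, f z ∂(κ ∘ₘ π) := by
  rw [← Measure.snd_compProd] at hf ⊢
  exact (integral_map measurable_snd.aemeasurable hf).symm

theorem MeasureTheory.MemLp.comp_fst_compProd [IsMarkovKernel κ] {g : Θ → ℝ} {p : ENNReal}
    (hg : MemLp g p π) :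
    MemLp (fun x : Θ × Ω => g x.1) p (π ⊗ₘ κ) := by
  rw [← Measure.fst_compProd π κ] at hg
  exact (memLp_map_measure_iff hg.1 measurable_fst.aemeasurable).1 hg

theorem integral_compProd_fst [IsMarkovKernel κ] {g : Θ → ℝ} (hg : AEStronglyMeasurable g π) :
    ∫ x, g x.1 ∂(π ⊗ₘ κ) = ∫ θ, g θ ∂π := by
  rw [← Measure.fst_compProd π κ] at hg
  conv_rhs => rw [← Measure.fst_compProd π κ]
  exact (integral_map measurable_fst.aemeasurable hg).symm

variable [IsMarkovKernel κ] {f : Ω → ℝ} {g : Θ → ℝ}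

theorem memLp_compProd_sub (hf : Measurable f) (hg : Measurable g) (hfκ : ∀ θ, MemLp f 2 (κ θ))
    (hrisk : Integrable (fun θ => ∫ z, (f z - g θ) ^ 2 ∂κ θ) π) :
    MemLp (fun x : Θ × Ω => f x.2 - g x.1) 2 (π ⊗ₘ κ) := by
  have hmeas : Measurable fun x : Θ × Ω => f x.2 - g x.1 := by fun_prop
  refine (memLp_two_iff_integrable_sq hmeas.aestronglyMeasurable).2 ?_
  refine (Measure.integrable_compProd_iff (hmeas.pow_const 2).aestronglyMeasurable).2
    ⟨ae_of_all _ fun θ => ((hfκ θ).sub (memLp_const (g θ))).integrable_sq,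
      hrisk.congr (ae_of_all _ fun θ => ?_)⟩
  simp only [Real.norm_eq_abs, abs_pow, sq_abs]

theorem memLp_comp_of_integrable_risk [IsFiniteMeasure π] (hf : Measurable f) (hg : Measurable g)
    (hfκ : ∀ θ, MemLp f 2 (κ θ)) (hrisk : Integrable (fun θ => ∫ z, (f z - g θ) ^ 2 ∂κ θ) π)
    {c : ℝ} (hgc : MemLp (fun θ => g θ - c) 2 π) :
    MemLp f 2 (κ ∘ₘ π) := by
  refine (memLp_compProd_snd_iff hf.aestronglyMeasurable).1 (MemLp.ae_eq (ae_of_all _ fun x => ?_)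
    (((memLp_compProd_sub hf hg hfκ hrisk).add hgc.comp_fst_compProd).add (memLp_const c)))
  simp only [Pi.add_apply, sub_add_sub_cancel, sub_add_cancel]

theorem sqrt_integral_comp_sub_const_sq_le (hf : Measurable f) (hg : Measurable g)
    (hfκ : ∀ θ, MemLp f 2 (κ θ)) (hrisk : Integrable (fun θ => ∫ z, (f z - g θ) ^ 2 ∂κ θ) π)
    {c : ℝ} (hgc : MemLp (fun θ => g θ - c) 2 π) :
    √(∫ z, (f z - c) ^ 2 ∂(κ ∘ₘ π))
      ≤ √(∫ θ, ∫ z, (f z - g θ) ^ 2 ∂κ θ ∂π) + √(∫ θ, (g θ - c) ^ 2 ∂π) := by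
  have hu := memLp_compProd_sub hf hg hfκ hrisk
  have hv : MemLp (fun x : Θ × Ω => g x.1 - c) 2 (π ⊗ₘ κ) := hgc.comp_fst_compProd
  calc √(∫ z, (f z - c) ^ 2 ∂(κ ∘ₘ π))
      = √(∫ x, ((f x.2 - g x.1) + (g x.1 - c)) ^ 2 ∂(π ⊗ₘ κ)) := by
        simp only [sub_add_sub_cancel]
        rw [integral_compProd_snd ((hf.sub_const c).pow_const 2).aestronglyMeasurable]
    _ ≤ √(∫ x, (f x.2 - g x.1) ^ 2 ∂(π ⊗ₘ κ)) + √(∫ x, (g x.1 - c) ^ 2 ∂(π ⊗ₘ κ)) :=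
        sqrt_integral_add_sq_le hu hv
    _ = √(∫ θ, ∫ z, (f z - g θ) ^ 2 ∂κ θ ∂π) + √(∫ θ, (g θ - c) ^ 2 ∂π) := by
        rw [Measure.integral_compProd hu.integrable_sq,
          integral_compProd_fst ((hg.sub_const c).pow_const 2).aestronglyMeasurable]

end Marginal

theorem constrained_risk_inequality_general
    {Ω Θ : Type*} [MeasurableSpace Ω] [MeasurableSpace Θ]
    (P : ProbabilityTheory.Kernel Θ Ω) [ProbabilityTheory.IsMarkovKernel P]
    (ν : Measure Ω)
    (Q : Θ → ℝ) (hQmeas : Measurable Q)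
    (Qhat : Ω → ℝ) (hQhatmeas : Measurable Qhat)
    (hQhatL2 : ∀ θ : Θ, Integrable (fun z => (Qhat z) ^ 2) (P θ))
    (π0 π1 : Measure Θ) [IsProbabilityMeasure π0] [IsProbabilityMeasure π1]
    (γ0 γ1 : Ω → ℝ) (hγ0meas : Measurable γ0) (hγ1meas : Measurable γ1)
    (hγ0pos : ∀ᵐ z ∂ν, 0 < γ0 z) (hγ1nonneg : ∀ᵐ z ∂ν, 0 ≤ γ1 z)
    (hγ0 : π0.bind (fun θ => P θ) = ν.withDensity (fun z => ENNReal.ofReal (γ0 z)))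
    (hγ1 : π1.bind (fun θ => P θ) = ν.withDensity (fun z => ENNReal.ofReal (γ1 z)))
    (μ0 μ1 σ0 χ : ℝ)
    (hμ0 : μ0 = ∫ θ, Q θ ∂π0) (hμ1 : μ1 = ∫ θ, Q θ ∂π1)
    (hQint0 : Integrable Q π0) (hQint1 : Integrable Q π1)
    (hσ0 : σ0 = Real.sqrt (∫ θ, (Q θ - μ0) ^ 2 ∂π0))
    (hσ0int : Integrable (fun θ => (Q θ - μ0) ^ 2) π0)
    (hχ : χ = Real.sqrt (∫ z, (γ1 z / γ0 z - 1) ^ 2 ∂(π0.bind (fun θ => P θ))))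
    (hχint : Integrable (fun z => (γ1 z / γ0 z - 1) ^ 2) (π0.bind (fun θ => P θ)))
    (B : Θ → ℝ) (hB : ∀ θ : Θ, B θ = (∫ z, Qhat z ∂(P θ)) - Q θ)
    (hriskint : Integrable (fun θ => ∫ z, (Qhat z - Q θ) ^ 2 ∂(P θ)) π0)
    (ε : ℝ) (hε : 0 ≤ ε)
    (hrisk : (∫ θ, (∫ z, (Qhat z - Q θ) ^ 2 ∂(P θ)) ∂π0) ≤ ε ^ 2) :
    |μ1 - μ0| - (ε + σ0) * χ ≤ |(∫ θ, B θ ∂π1) - ∫ θ, B θ ∂π0| := by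
  simp only [show (fun θ => P θ) = ⇑P from rfl] at hγ0 hγ1 hχ hχint
  have hQhat_fiber : ∀ θ, MemLp Qhat 2 (P θ) := fun θ =>
    (memLp_two_iff_integrable_sq hQhatmeas.aestronglyMeasurable).2 (hQhatL2 θ)
  have hQdev : MemLp (fun θ => Q θ - μ0) 2 π0 :=
    (memLp_two_iff_integrable_sq (by fun_prop)).2 hσ0int
  have hQhat : MemLp Qhat 2 (P ∘ₘ π0) :=
    memLp_comp_of_integrable_risk hQhatmeas hQmeas hQhat_fiber hriskint hQdev
  have hQhat_dev : √(∫ z, (Qhat z - μ0) ^ 2 ∂(P ∘ₘ π0)) ≤ ε + σ0 := by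
    refine (sqrt_integral_comp_sub_const_sq_le hQhatmeas hQmeas hQhat_fiber hriskint hQdev).trans ?_
    rw [← hσ0]
    gcongr
    exact (Real.sqrt_le_sqrt hrisk).trans_eq (Real.sqrt_sq hε)
  have hratio : MemLp (fun z => γ1 z / γ0 z - 1) 2 (P ∘ₘ π0) :=
    (memLp_two_iff_integrable_sq
      ((hγ1meas.div hγ0meas).sub_const 1).aestronglyMeasurable).2 hχint
  have hQhat1 : Integrable Qhat (P ∘ₘ π1) := integrable_of_eq_withDensity_ofReal hγ0meas hγ1meas
    hγ0pos hγ1nonneg hγ0 hγ1 hQhat hratio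
  have hshift := abs_integral_sub_integral_le_of_eq_withDensity_ofReal hγ0meas hγ1meas
    hγ0pos hγ1nonneg hγ0 hγ1 hQhat hratio μ0
  rw [← hχ] at hshift
  simp only [hB]
  rw [integral_integral_sub_eq_integral_comp_sub hQhat1 hQint1,
    integral_integral_sub_eq_integral_comp_sub (hQhat.integrable one_le_two) hQint0, ← hμ0, ← hμ1]
  set X0 := ∫ z, Qhat z ∂(P ∘ₘ π0)
  set X1 := ∫ z, Qhat z ∂(P ∘ₘ π1)
  have hχ_nonneg : 0 ≤ χ := hχ ▸ Real.sqrt_nonneg _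
  calc |μ1 - μ0| - (ε + σ0) * χ ≤ |μ1 - μ0| - |X1 - X0| := by
        nlinarith [mul_le_mul_of_nonneg_right hQhat_dev hχ_nonneg]
    _ ≤ |(μ1 - μ0) - (X1 - X0)| := abs_sub_abs_le_abs_sub _ _
    _ = |(X1 - μ1) - (X0 - μ0)| := by rw [abs_sub_comm]; ring_nf

/-- Constrained risk inequality (Cai–Low, as used in the paper). -/
theorem constrained_risk_inequality
    {Ω Θ : Type*} [MeasurableSpace Ω] [MeasurableSpace Θ]
    (P : ProbabilityTheory.Kernel Θ Ω) [ProbabilityTheory.IsMarkovKernel P]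
    (ν : Measure Ω) [SigmaFinite ν]
    (Q : Θ → ℝ) (hQmeas : Measurable Q)
    (Qhat : Ω → ℝ) (hQhatmeas : Measurable Qhat)
    (hQhatL2 : ∀ θ : Θ, Integrable (fun z => (Qhat z) ^ 2) (P θ))
    (π0 π1 : Measure Θ) [IsProbabilityMeasure π0] [IsProbabilityMeasure π1]
    (Θ0 Θ1 : Set Θ) (hΘ0 : MeasurableSet Θ0) (hΘ1 : MeasurableSet Θ1)
    (hdisj : Disjoint Θ0 Θ1) (hπ0supp : π0 Θ0 = 1) (hπ1supp : π1 Θ1 = 1)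
    (γ0 γ1 : Ω → ℝ) (hγ0meas : Measurable γ0) (hγ1meas : Measurable γ1)
    (hγ0pos : ∀ᵐ z ∂ν, 0 < γ0 z) (hγ1nonneg : ∀ᵐ z ∂ν, 0 ≤ γ1 z)
    (hγ0 : π0.bind (fun θ => P θ) = ν.withDensity (fun z => ENNReal.ofReal (γ0 z)))
    (hγ1 : π1.bind (fun θ => P θ) = ν.withDensity (fun z => ENNReal.ofReal (γ1 z)))
    (μ0 μ1 σ0 χ : ℝ)
    (hμ0 : μ0 = ∫ θ, Q θ ∂π0) (hμ1 : μ1 = ∫ θ, Q θ ∂π1)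
    (hQint0 : Integrable Q π0) (hQint1 : Integrable Q π1)
    (hσ0 : σ0 = Real.sqrt (∫ θ, (Q θ - μ0) ^ 2 ∂π0))
    (hσ0int : Integrable (fun θ => (Q θ - μ0) ^ 2) π0)
    (hσ1int : Integrable (fun θ => (Q θ - μ1) ^ 2) π1)
    (hχ : χ = Real.sqrt (∫ z, (γ1 z / γ0 z - 1) ^ 2 ∂(π0.bind (fun θ => P θ))))
    (hχint : Integrable (fun z => (γ1 z / γ0 z - 1) ^ 2) (π0.bind (fun θ => P θ)))
    (B : Θ → ℝ) (hB : ∀ θ : Θ, B θ = (∫ z, Qhat z ∂(P θ)) - Q θ)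
    (hBint0 : Integrable B π0) (hBint1 : Integrable B π1)
    (hriskint : Integrable (fun θ => ∫ z, (Qhat z - Q θ) ^ 2 ∂(P θ)) π0)
    (ε : ℝ) (hε : 0 ≤ ε)
    (hrisk : (∫ θ, (∫ z, (Qhat z - Q θ) ^ 2 ∂(P θ)) ∂π0) ≤ ε ^ 2) :
    |μ1 - μ0| - (ε + σ0) * χ ≤ |(∫ θ, B θ ∂π1) - ∫ θ, B θ ∂π0| :=
  constrained_risk_inequality_general P ν Q hQmeas Qhat hQhatmeas hQhatL2 π0 π1 γ0 γ1 hγ0meas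
    hγ1meas hγ0pos hγ1nonneg hγ0 hγ1 μ0 μ1 σ0 χ hμ0 hμ1 hQint0 hQint1 hσ0 hσ0int hχ hχint B hB
    hriskint ε hε hrisk
end

section
/- (Lemma: control of binned integrals of the triple Haar kernel.) There is an absolute constant C such that the following holds. Let M ≤ k₁ ≤ k₂ ≤ k₃ be positive integers with M dividing k₁, k₁ dividing k₂, and k₂ dividing k₃, and let f be a bounded measurable probability density on [0,1]. For m = 1,…,M let χ_m = [(m−1)/M, m/M). Then for every m, | ∫∫∫_{χ_m×χ_m×χ_m} [ ∫₀¹ K_{k₁}(x,x₁)K_{k₂}(x,x₂)K_{k₃}(x,x₃) dx ] f(x₁)f(x₂)f(x₃) dx₁dx₂dx₃ | ≤ C·(sup_{[0,1]} f)³ / M. -/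
open MeasureTheory Set Filter
open scoped Classical

noncomputable section

/-- Indicator of the interval ((j)/k, (j+1)/k] (0-indexed version of ((j-1)/k, j/k], j=1..k). -/
def haarInd (k j : ℕ) (x : ℝ) : ℝ :=
  if x ∈ Set.Ioc ((j : ℝ) / k) (((j : ℝ) + 1) / k) then 1 else 0

/-- Haar function ψ_{k,j} (0-indexed). -/
def haarFun (k j : ℕ) (x : ℝ) : ℝ := Real.sqrt k * haarInd k j x

/-- Haar projection kernel K_k(x,y) = k·Σ_j 1{x ∈ I_j}1{y ∈ I_j}. -/
def haarKernel (k : ℕ) (x y : ℝ) : ℝ :=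
  (k : ℝ) * ∑ j ∈ Finset.range k, haarInd k j x * haarInd k j y

/-- Haar projection f_k(x) = ∫₀¹ K_k(x,y) f(y) dy. -/
def haarProj (k : ℕ) (f : ℝ → ℝ) (x : ℝ) : ℝ :=
  ∫ y in Set.Icc (0:ℝ) 1, haarKernel k x y * f y

/-- f is a probability density on [0,1]. -/
def IsDensity (f : ℝ → ℝ) : Prop :=
  Measurable f ∧ (∀ x ∈ Set.Icc (0:ℝ) 1, 0 ≤ f x) ∧ (∫ x in Set.Icc (0:ℝ) 1, f x) = 1

/-- Law of an i.i.d. n-sample X_1,…,X_n from density f on [0,1]. -/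
def sampleMeasure (f : ℝ → ℝ) (n : ℕ) : Measure (Fin n → ℝ) :=
  (Measure.pi fun _ : Fin n => volume.restrict (Set.Icc (0:ℝ) 1)).withDensity
    (fun X => ∏ i, ENNReal.ofReal (f (X i)))

/-- Hölder ball H(β,L) of functions on [0,1]. -/
def holderBall (β L : ℝ) : Set (ℝ → ℝ) :=
  {h | (∀ x ∈ Set.Icc (0:ℝ) 1, |h x| ≤ L) ∧
    ∀ x ∈ Set.Icc (0:ℝ) 1, ∀ y ∈ Set.Icc (0:ℝ) 1, |h x - h y| ≤ L * |x - y| ^ β}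

/-- Second-order Haar U-statistic U_n^{(k)}. -/
def Ustat (k n : ℕ) (X : Fin n → ℝ) : ℝ :=
  (1 / ((n : ℝ) * ((n : ℝ) - 1))) *
    ∑ i : Fin n, ∑ j : Fin n, if i ≠ j then haarKernel k (X i) (X j) else 0

/-- Third-order V-statistic over distinct triples. -/
def V3 (n : ℕ) (h : ℝ → ℝ → ℝ → ℝ) (X : Fin n → ℝ) : ℝ :=
  (1 / ((n : ℝ) * ((n : ℝ) - 1) * ((n : ℝ) - 2))) *
    ∑ i1 : Fin n, ∑ i2 : Fin n, ∑ i3 : Fin n,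
      if i1 ≠ i2 ∧ i1 ≠ i3 ∧ i2 ≠ i3 then h (X i1) (X i2) (X i3) else 0

/-- Third-order U-statistic estimator of ∫ f³ built from Haar projection kernels. -/
def phiHat (k1 k2 k3 n : ℕ) (X : Fin n → ℝ) : ℝ :=
  V3 n (fun x1 x2 x3 => ∫ x in Set.Icc (0:ℝ) 1,
      haarKernel k1 x x1 * haarKernel k1 x x2 * haarKernel k1 x x3) X
  + 3 * V3 n (fun x1 x2 x3 => ∫ x in Set.Icc (0:ℝ) 1,
      haarKernel k1 x x1 * (haarKernel k3 x x2 - haarKernel k1 x x2) * haarKernel k1 x x3) X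
  + 3 * V3 n (fun x1 x2 x3 => ∫ x in Set.Icc (0:ℝ) 1,
      haarKernel k1 x x1 * (haarKernel k3 x x2 - haarKernel k1 x x2) *
        (haarKernel k3 x x3 - haarKernel k1 x x3)) X
  + 3 * V3 n (fun x1 x2 x3 => ∫ x in Set.Icc (0:ℝ) 1,
      (haarKernel k2 x x1 - haarKernel k1 x x1) * (haarKernel k2 x x2 - haarKernel k1 x x2) *
        (haarKernel k3 x x3 - haarKernel k2 x x3)) X
  + V3 n (fun x1 x2 x3 => ∫ x in Set.Icc (0:ℝ) 1,
      (haarKernel k2 x x1 - haarKernel k1 x x1) * (haarKernel k2 x x2 - haarKernel k1 x x2) *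
        (haarKernel k2 x x3 - haarKernel k1 x x3)) X

/-- N = largest integer with d^{N-1} ≤ n^{1-2/log log n}. -/
def gridN (d : ℝ) (n : ℕ) : ℕ :=
  Nat.findGreatest (fun N => d ^ (N - 1) ≤ (n : ℝ) ^ (1 - 2 / Real.log (Real.log n))) n

/-- β_j solving d^j·n = n^{2/(1+4β_j)}. -/
def gridBeta (d : ℝ) (n j : ℕ) : ℝ :=
  (2 * Real.log n / Real.log (d ^ j * (n : ℝ)) - 1) / 4

/-- k_j* = (n²/log n)^{1/(1+4β_j)}. -/
def gridKstar (d : ℝ) (n : ℕ) (j : ℕ) : ℝ :=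
  ((n : ℝ) ^ 2 / Real.log n) ^ (1 / (1 + 4 * gridBeta d n j))

/-- s* = smallest j with k_j* ≥ n. -/
def gridS (d : ℝ) (n : ℕ) : ℕ := sInf {j : ℕ | (n : ℝ) ≤ gridKstar d n j}

/-- The Lepski selector ĵ based on the Haar quadratic U-statistics. -/
def lepskiJ (d Copt : ℝ) (n : ℕ) (X : Fin n → ℝ) : ℕ :=
  sInf {j : ℕ | gridS d n ≤ j ∧ j ≤ gridN d n - 1 ∧
    ∀ l : ℕ, j ≤ l → l ≤ gridN d n - 1 →
      (Ustat (⌈gridKstar d n l⌉₊) n X - Ustat (⌈gridKstar d n j⌉₊) n X) ^ 2 ≤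
        Copt ^ 2 * Real.log n * (gridKstar d n l / (n : ℝ) ^ 2)}

/-- Completely degenerate part H of G = K_{k'} − K_k under density f. -/
def degKernel (k k' : ℕ) (f : ℝ → ℝ) (x y : ℝ) : ℝ :=
  (haarKernel k' x y - haarKernel k x y)
  - (∫ y' in Set.Icc (0:ℝ) 1, (haarKernel k' x y' - haarKernel k x y') * f y')
  - (∫ x' in Set.Icc (0:ℝ) 1, (haarKernel k' x' y - haarKernel k x' y) * f x')
  + ∫ x' in Set.Icc (0:ℝ) 1, ∫ y' in Set.Icc (0:ℝ) 1,
      (haarKernel k' x' y' - haarKernel k x' y') * f x' * f y'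



/-! For `k₁ ∣ k₃` and `k₂ ∣ k₃` the functions `K_{k₁}(·, x₁)` and `K_{k₂}(·, x₂)` are constant on
the cell of mesh `1/k₃` that carries `K_{k₃}(·, x₃)`, so the reproducing property collapses the inner
integral to `K_{k₁}(x₃, x₁) K_{k₂}(x₃, x₂)`. Integrating out `x₃` and then `x₂`, each time using
`f ≤ F` and `∫ K_k(x, y) dx ≤ 1`, leaves `F² ∫_χ f ≤ F³ |χ| = F³ / M`. -/

-- `⌈k x⌉` is the 1-based index of the cell `((j - 1)/k, j/k]` containing `x`.
theorem haarInd_eq_ite {k : ℕ} (hk : 0 < k) (j : ℕ) (x : ℝ) :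
    haarInd k j x = if ⌈(k : ℝ) * x⌉ = j + 1 then 1 else 0 := by
  have hk' : (0 : ℝ) < k := by exact_mod_cast hk
  simp only [haarInd, mem_Ioc, Int.ceil_eq_iff, div_lt_iff₀' hk', le_div_iff₀' hk']
  push_cast
  simp

theorem haarInd_eq_zero_of_notMem {k j : ℕ} (hj : j < k) {x : ℝ} (hx : x ∉ Ioc (0 : ℝ) 1) :
    haarInd k j x = 0 := by
  have hk : (0 : ℝ) < k := by exact_mod_cast (j.zero_le.trans_lt hj)
  have hj' : (j : ℝ) + 1 ≤ k := by exact_mod_cast hj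
  rw [haarInd, if_neg]
  refine fun hxj => hx ⟨(div_nonneg j.cast_nonneg hk.le).trans_lt hxj.1, hxj.2.trans ?_⟩
  rwa [div_le_one hk]

theorem ceil_mul_eq_of_dvd {k k' : ℕ} (hk' : k' ≠ 0) (hdvd : k ∣ k') {x y : ℝ}
    (h : ⌈(k' : ℝ) * x⌉ = ⌈(k' : ℝ) * y⌉) : ⌈(k : ℝ) * x⌉ = ⌈(k : ℝ) * y⌉ := by
  obtain ⟨t, rfl⟩ := hdvd
  have ht : (t : ℝ) ≠ 0 := by exact_mod_cast right_ne_zero_of_mul hk'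
  have hceil : ∀ z : ℝ, ⌈(k : ℝ) * z⌉ = -(-⌈((k * t : ℕ) : ℝ) * z⌉ / t) := by
    intro z
    rw [← Int.floor_neg, ← Int.floor_div_natCast, ← Int.ceil_neg, neg_div, neg_neg]
    congr 1
    push_cast
    field_simp
  rw [hceil, hceil y, h]

theorem mem_Ioc_iff_ceil_mem_Icc {k : ℕ} (hk : 0 < k) {x : ℝ} :
    x ∈ Ioc (0 : ℝ) 1 ↔ ⌈(k : ℝ) * x⌉ ∈ Icc (1 : ℤ) k := by
  have hk' : (0 : ℝ) < k := by exact_mod_cast hk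
  simp only [mem_Ioc, mem_Icc, Int.one_le_ceil_iff, Int.ceil_le, Int.cast_natCast,
    mul_pos_iff_of_pos_left hk', mul_le_iff_le_one_right hk']

theorem haarKernel_eq_ite (k : ℕ) (x y : ℝ) :
    haarKernel k x y =
      if x ∈ Ioc (0 : ℝ) 1 ∧ ⌈(k : ℝ) * x⌉ = ⌈(k : ℝ) * y⌉ then (k : ℝ) else 0 := by
  rcases k.eq_zero_or_pos with rfl | hk
  · simp [haarKernel]
  unfold haarKernel
  by_cases hx : x ∈ Ioc (0 : ℝ) 1
  · obtain ⟨hc1, hck⟩ := (mem_Ioc_iff_ceil_mem_Icc hk).mp hx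
    set j₀ := (⌈(k : ℝ) * x⌉ - 1).toNat
    have hj₀ : ⌈(k : ℝ) * x⌉ = j₀ + 1 := by omega
    rw [Finset.sum_eq_single_of_mem j₀ (Finset.mem_range.mpr (by omega))]
    · simp [haarInd_eq_ite hk, hj₀, hx, eq_comm]
    · intro j _ hj
      simp [haarInd_eq_ite hk, hj₀, hj.symm]
  · rw [if_neg (fun h => hx h.1), Finset.sum_eq_zero, mul_zero]
    intro j hj
    rw [haarInd_eq_zero_of_notMem (Finset.mem_range.mp hj) hx, zero_mul]

theorem haarKernel_mul_haarKernel_of_dvd {k k' : ℕ} (hk' : 0 < k') (hdvd : k ∣ k')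
    (x y z : ℝ) :
    haarKernel k x y * haarKernel k' x z = haarKernel k z y * haarKernel k' x z := by
  rw [haarKernel_eq_ite k' x z]
  split_ifs with h
  · obtain ⟨hx, hxz⟩ := h
    have hz : z ∈ Ioc (0 : ℝ) 1 :=
      (mem_Ioc_iff_ceil_mem_Icc hk').mpr (hxz ▸ (mem_Ioc_iff_ceil_mem_Icc hk').mp hx)
    simp only [haarKernel_eq_ite k, hx, hz, true_and, ceil_mul_eq_of_dvd hk'.ne' hdvd hxz]
  · simp

theorem haarKernel_nonneg (k : ℕ) (x y : ℝ) : 0 ≤ haarKernel k x y := by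
  rw [haarKernel_eq_ite]; split_ifs <;> positivity

theorem norm_haarKernel_le (k : ℕ) (x y : ℝ) : ‖haarKernel k x y‖ ≤ k := by
  rw [Real.norm_of_nonneg (haarKernel_nonneg k x y), haarKernel_eq_ite]
  split_ifs <;> simp

theorem haarKernel_eq_zero_of_notMem (k : ℕ) {x : ℝ} (hx : x ∉ Ioc (0 : ℝ) 1) (y : ℝ) :
    haarKernel k x y = 0 := by
  rw [haarKernel_eq_ite, if_neg (fun h => hx h.1)]

theorem measurable_haarInd (k j : ℕ) : Measurable (haarInd k j) :=
  Measurable.ite measurableSet_Ioc measurable_const measurable_const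

theorem measurable_haarKernel_left (k : ℕ) (y : ℝ) : Measurable (haarKernel k · y) := by
  unfold haarKernel
  exact measurable_const.mul <| Finset.measurable_sum _ fun j _ =>
    (measurable_haarInd k j).mul_const _

theorem MeasureTheory.IntegrableOn.mul_haarKernel_left {s : Set ℝ} {f : ℝ → ℝ}
    (hf : IntegrableOn f s) (k : ℕ) (y : ℝ) : IntegrableOn (fun x => f x * haarKernel k x y) s :=
  hf.mul_bdd (measurable_haarKernel_left k y).aestronglyMeasurable
    (ae_of_all _ fun x => norm_haarKernel_le k x y)

theorem integral_haarInd {k j : ℕ} (hj : j < k) :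
    ∫ x in Icc (0 : ℝ) 1, haarInd k j x = 1 / k := by
  have hk : (0 : ℝ) < k := by exact_mod_cast j.zero_le.trans_lt hj
  have hj' : (j : ℝ) + 1 ≤ k := by exact_mod_cast hj
  have hsub : Ioc ((j : ℝ) / k) ((j + 1) / k) ⊆ Icc 0 1 := fun x hx =>
    ⟨(div_nonneg j.cast_nonneg hk.le).trans hx.1.le, hx.2.trans ((div_le_one hk).mpr hj')⟩
  have hind : haarInd k j = (Ioc ((j : ℝ) / k) ((j + 1) / k)).indicator 1 := by
    ext x; simp [haarInd, indicator]
  rw [hind, integral_indicator_one measurableSet_Ioc, measureReal_restrict_apply measurableSet_Ioc,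
    inter_eq_left.mpr hsub, Real.volume_real_Ioc_of_le (by gcongr; linarith)]
  ring

theorem sum_haarInd {k : ℕ} (hk : 0 < k) (y : ℝ) :
    ∑ j ∈ Finset.range k, haarInd k j y = (Ioc (0 : ℝ) 1).indicator 1 y := by
  have hk' : (k : ℝ) ≠ 0 := by exact_mod_cast hk.ne'
  have hdiag := haarKernel_eq_ite k y y
  have hsq : ∀ j, haarInd k j y * haarInd k j y = haarInd k j y := fun j => by
    unfold haarInd; split_ifs <;> norm_num
  simp only [haarKernel, hsq, and_true] at hdiag
  rw [indicator]
  split_ifs at hdiag ⊢ <;> simpa [hk'] using hdiag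

theorem integral_haarKernel_left {k : ℕ} (hk : 0 < k) (y : ℝ) :
    ∫ x in Icc (0 : ℝ) 1, haarKernel k x y = (Ioc (0 : ℝ) 1).indicator 1 y := by
  have hint : ∀ j, Integrable (fun x => haarInd k j x * haarInd k j y)
      (volume.restrict (Icc (0:ℝ) 1)) := fun j =>
    (Measure.integrableOn_of_bounded (M := 1) (by simp)
      (measurable_haarInd k j).aestronglyMeasurable (ae_of_all _ fun x => by
        unfold haarInd; split_ifs <;> norm_num)).mul_const _
  simp only [haarKernel]
  rw [integral_const_mul, integral_finsetSum _ fun j _ => hint j, ← sum_haarInd hk,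
    Finset.mul_sum]
  refine Finset.sum_congr rfl fun j hj => ?_
  rw [integral_mul_const, integral_haarInd (Finset.mem_range.mp hj)]
  field_simp

theorem integral_haarKernel_mul_mul {k₁ k₂ k₃ : ℕ} (hk₃ : 0 < k₃) (h₁ : k₁ ∣ k₃) (h₂ : k₂ ∣ k₃)
    (x₁ x₂ x₃ : ℝ) :
    ∫ x in Icc (0 : ℝ) 1, haarKernel k₁ x x₁ * haarKernel k₂ x x₂ * haarKernel k₃ x x₃ =
      haarKernel k₁ x₃ x₁ * haarKernel k₂ x₃ x₂ := by
  have hswap : ∀ x, haarKernel k₁ x x₁ * haarKernel k₂ x x₂ * haarKernel k₃ x x₃ =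
      haarKernel k₁ x₃ x₁ * haarKernel k₂ x₃ x₂ * haarKernel k₃ x x₃ := fun x => by
    rw [mul_assoc, haarKernel_mul_haarKernel_of_dvd hk₃ h₂, ← mul_assoc, mul_right_comm,
      haarKernel_mul_haarKernel_of_dvd hk₃ h₁, mul_right_comm]
  simp_rw [hswap, integral_const_mul, integral_haarKernel_left hk₃]
  by_cases hx₃ : x₃ ∈ Ioc (0 : ℝ) 1
  · simp [hx₃]
  · simp [haarKernel_eq_zero_of_notMem _ hx₃]

theorem setIntegral_mul_haarKernel_le {k : ℕ} (hk : 0 < k) {s : Set ℝ} (hs : MeasurableSet s)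
    (hs₁ : s ⊆ Icc 0 1) {g : ℝ → ℝ} {F : ℝ} (hF : 0 ≤ F) (hg : ∀ x ∈ s, 0 ≤ g x ∧ g x ≤ F)
    (y : ℝ) : ∫ x in s, g x * haarKernel k x y ≤ F := by
  have hint : IntegrableOn (fun x => F * haarKernel k x y) (Icc 0 1) :=
    (integrableOn_const (C := F) (by simp)).mul_haarKernel_left k y
  calc ∫ x in s, g x * haarKernel k x y
      ≤ ∫ x in s, F * haarKernel k x y := by
        refine integral_mono_of_nonneg ?_ (hint.mono_set hs₁) ?_
        · filter_upwards [ae_restrict_mem hs] with x hx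
          exact mul_nonneg (hg x hx).1 (haarKernel_nonneg k x y)
        · filter_upwards [ae_restrict_mem hs] with x hx
          exact mul_le_mul_of_nonneg_right (hg x hx).2 (haarKernel_nonneg k x y)
    _ ≤ ∫ x in Icc 0 1, F * haarKernel k x y :=
        setIntegral_mono_set hint (ae_of_all _ fun x => mul_nonneg hF (haarKernel_nonneg k x y))
          hs₁.eventuallyLE
    _ ≤ F := by
        rw [integral_const_mul, integral_haarKernel_left hk]
        exact mul_le_of_le_one_right hF (indicator_le_self' (by simp) y)

section BinnedBound

variable {k₁ k₂ : ℕ} {s : Set ℝ} {f : ℝ → ℝ} {F : ℝ}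

theorem setIntegral_haarKernel_mul_haarKernel_le (hk₂ : 0 < k₂) (h₁₂ : k₁ ∣ k₂)
    (hs : MeasurableSet s) (hs₁ : s ⊆ Icc 0 1) (hF : 0 ≤ F) (hfs : ∀ x ∈ s, 0 ≤ f x ∧ f x ≤ F)
    {x₁ x₂ : ℝ} (hx₁ : x₁ ∈ s) (hx₂ : x₂ ∈ s) :
    ∫ x₃ in s, haarKernel k₁ x₃ x₁ * haarKernel k₂ x₃ x₂ * f x₁ * f x₂ * f x₃ ≤
      F * f x₁ * (f x₂ * haarKernel k₁ x₂ x₁) := by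
  have hfactor : ∀ x₃, haarKernel k₁ x₃ x₁ * haarKernel k₂ x₃ x₂ * f x₁ * f x₂ * f x₃ =
      f x₁ * (f x₂ * haarKernel k₁ x₂ x₁) * (f x₃ * haarKernel k₂ x₃ x₂) := fun x₃ => by
    rw [haarKernel_mul_haarKernel_of_dvd hk₂ h₁₂]; ring
  simp_rw [hfactor, integral_const_mul]
  have hc : 0 ≤ f x₁ * (f x₂ * haarKernel k₁ x₂ x₁) :=
    mul_nonneg (hfs x₁ hx₁).1 (mul_nonneg (hfs x₂ hx₂).1 (haarKernel_nonneg _ _ _))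
  calc f x₁ * (f x₂ * haarKernel k₁ x₂ x₁) * ∫ x₃ in s, f x₃ * haarKernel k₂ x₃ x₂
      ≤ f x₁ * (f x₂ * haarKernel k₁ x₂ x₁) * F :=
        mul_le_mul_of_nonneg_left (setIntegral_mul_haarKernel_le hk₂ hs hs₁ hF hfs x₂) hc
    _ = F * f x₁ * (f x₂ * haarKernel k₁ x₂ x₁) := by ring

theorem setIntegral_triple_haarKernel_le (hk₁ : 0 < k₁) (hk₂ : 0 < k₂) (h₁₂ : k₁ ∣ k₂)
    (hs : MeasurableSet s) (hs₁ : s ⊆ Icc 0 1) (hf : Measurable f) (hF : 0 ≤ F)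
    (hfs : ∀ x ∈ s, 0 ≤ f x ∧ f x ≤ F) :
    |∫ x₁ in s, ∫ x₂ in s, ∫ x₃ in s,
        haarKernel k₁ x₃ x₁ * haarKernel k₂ x₃ x₂ * f x₁ * f x₂ * f x₃| ≤
      F ^ 3 * volume.real s := by
  have hinner : ∀ x₁ ∈ s, ∀ x₂ ∈ s, 0 ≤ ∫ x₃ in s,
      haarKernel k₁ x₃ x₁ * haarKernel k₂ x₃ x₂ * f x₁ * f x₂ * f x₃ := fun x₁ hx₁ x₂ hx₂ =>
    setIntegral_nonneg hs fun x₃ hx₃ => by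
      have := haarKernel_nonneg k₁ x₃ x₁; have := haarKernel_nonneg k₂ x₃ x₂
      have := (hfs x₁ hx₁).1; have := (hfs x₂ hx₂).1; have := (hfs x₃ hx₃).1
      positivity
  have hfin : volume s < ⊤ := (measure_mono hs₁).trans_lt measure_Icc_lt_top
  have hnorm : ∀ x ∈ s, ‖f x‖ ≤ F := fun x hx => by
    rw [Real.norm_of_nonneg (hfs x hx).1]; exact (hfs x hx).2
  have hfint : IntegrableOn f s := Measure.integrableOn_of_bounded hfin.ne
    hf.aestronglyMeasurable ((ae_restrict_iff' hs).mpr <| ae_of_all _ hnorm)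
  have hmiddle : ∀ x₁ ∈ s, ∫ x₂ in s, ∫ x₃ in s,
      haarKernel k₁ x₃ x₁ * haarKernel k₂ x₃ x₂ * f x₁ * f x₂ * f x₃ ≤ F ^ 2 * f x₁ := by
    intro x₁ hx₁
    calc _ ≤ ∫ x₂ in s, F * f x₁ * (f x₂ * haarKernel k₁ x₂ x₁) := by
          refine integral_mono_of_nonneg ?_
            ((hfint.mul_haarKernel_left k₁ x₁).const_mul _) ?_
          · exact (ae_restrict_iff' hs).mpr <| ae_of_all _ (hinner x₁ hx₁)
          · exact (ae_restrict_iff' hs).mpr <| ae_of_all _ fun x₂ hx₂ =>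
              setIntegral_haarKernel_mul_haarKernel_le hk₂ h₁₂ hs hs₁ hF hfs hx₁ hx₂
      _ ≤ F * f x₁ * F := by
          rw [integral_const_mul]
          exact mul_le_mul_of_nonneg_left (setIntegral_mul_haarKernel_le hk₁ hs hs₁ hF hfs x₁)
            (mul_nonneg hF (hfs x₁ hx₁).1)
      _ = F ^ 2 * f x₁ := by ring
  rw [abs_of_nonneg (setIntegral_nonneg hs fun x₁ hx₁ => setIntegral_nonneg hs (hinner x₁ hx₁))]
  calc _ ≤ ∫ x₁ in s, F ^ 2 * f x₁ := by
        refine integral_mono_of_nonneg ?_ (hfint.const_mul _) ?_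
        · exact (ae_restrict_iff' hs).mpr <| ae_of_all _ fun x₁ hx₁ =>
            setIntegral_nonneg hs (hinner x₁ hx₁)
        · exact (ae_restrict_iff' hs).mpr <| ae_of_all _ hmiddle
    _ ≤ F ^ 2 * (F * volume.real s) := by
        rw [integral_const_mul]
        refine mul_le_mul_of_nonneg_left ((le_abs_self _).trans ?_) (by positivity)
        exact norm_setIntegral_le_of_norm_le_const hfin hnorm
    _ = F ^ 3 * volume.real s := by ring

end BinnedBound

/-- Lemma: control of binned integrals of the triple Haar kernel. -/
theorem binned_triple_haar_kernel :
    ∃ C > 0, ∀ M k1 k2 k3 : ℕ, 0 < M → M ∣ k1 → k1 ∣ k2 → k2 ∣ k3 →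
      M ≤ k1 → k1 ≤ k2 → k2 ≤ k3 →
      ∀ f : ℝ → ℝ, IsDensity f →
      ∀ F : ℝ, (∀ x ∈ Set.Icc (0:ℝ) 1, f x ≤ F) →
      ∀ m : ℕ, 1 ≤ m → m ≤ M →
        |∫ x1 in Set.Ico (((m : ℝ) - 1) / M) ((m : ℝ) / M),
          ∫ x2 in Set.Ico (((m : ℝ) - 1) / M) ((m : ℝ) / M),
          ∫ x3 in Set.Ico (((m : ℝ) - 1) / M) ((m : ℝ) / M),
            (∫ x in Set.Icc (0:ℝ) 1,
              haarKernel k1 x x1 * haarKernel k2 x x2 * haarKernel k3 x x3) *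
              f x1 * f x2 * f x3|
          ≤ C * F ^ 3 / M := by
  refine ⟨1, one_pos, ?_⟩
  rintro M k1 k2 k3 hM - h12 h23 hMk1 hk12 hk23 f ⟨hf, hf0, -⟩ F hF m hm1 hmM
  have hk1 : 0 < k1 := hM.trans_le hMk1
  have hk2 : 0 < k2 := hk1.trans_le hk12
  have hM' : (0 : ℝ) < M := by exact_mod_cast hM
  have hm1' : (1 : ℝ) ≤ m := by exact_mod_cast hm1
  have hmM' : (m : ℝ) ≤ M := by exact_mod_cast hmM
  have hbin : Ico (((m : ℝ) - 1) / M) (m / M) ⊆ Icc 0 1 :=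
    Ico_subset_Icc_self.trans <|
      Icc_subset_Icc (div_nonneg (by linarith) hM'.le) ((div_le_one hM').mpr hmM')
  have hbin_vol : volume.real (Ico (((m : ℝ) - 1) / M) (m / M)) = 1 / M := by
    rw [Real.volume_real_Ico_of_le (by gcongr; linarith)]; ring
  have hF0 : 0 ≤ F := (hf0 0 (by norm_num)).trans (hF 0 (by norm_num))
  simp_rw [integral_haarKernel_mul_mul (hk2.trans_le hk23) (h12.trans h23) h23]
  refine (setIntegral_triple_haarKernel_le hk1 hk2 h12 measurableSet_Ico hbin hf hF0
    fun x hx => ⟨hf0 x (hbin hx), hF x (hbin hx)⟩).trans_eq ?_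
  rw [hbin_vol]; ring
end
end

section
/- (Separation of functional values in the lower-bound construction.) Let T : ℝ → ℝ be three times differentiable with |T'''(u)| ≤ B for all u ∈ [0,2] and T''(1) > 0. Let h : ℝ → ℝ be a bounded measurable function supported in [0,1] with ∫₀¹ h = 0 and ∫₀¹ h² = c > 0, and fix β ∈ (0,1). Then there exist a constant C_T > 0 and an integer v₀ (both depending only on T, h, β) such that for every integer v ≥ v₀ and every sign vector (a₀,…,a_{v−1}) ∈ {−1,+1}^v, ∫₀¹ [ T( 1 + Σ_{i=0}^{v−1} a_i·v^{−β}·h(vx − i) ) − T(1) ] dx ≥ C_T·v^{−2β}. -/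
/-!
Expand `T` to second order at `1` with a cubic remainder: for `|f| ≤ M` and `∫ f = 0`,
`∫ (T (1 + f) - T 1) ≥ (T''(1)/2 - B M) ∫ f²`. For `f = ∑ aᵢ v^(-β) h(v x - i)` the bumps have
a.e. disjoint supports, so `M = ‖h‖∞ v^(-β)` works, `∫ f = 0` and `∫ f² = c v^(-2β)`. Once `v` is
large, `B M ≤ T''(1)/4`, leaving the lower bound `T''(1)/4 · c v^(-2β)`.
-/

open MeasureTheory Set Filter

theorem abs_le_mul_abs_pow_succ_of_hasDerivAt {g g' : ℝ → ℝ} {r K : ℝ} {n : ℕ} (hK : 0 ≤ K)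
    (hg0 : g 0 = 0) (hg : ∀ x, HasDerivAt g (g' x) x)
    (hg' : ∀ x ∈ Icc (-r) r, |g' x| ≤ K * |x| ^ n) {t : ℝ} (ht : |t| ≤ r) :
    |g t| ≤ K * |t| ^ (n + 1) := by
  have hsub : Icc (-|t|) |t| ⊆ Icc (-r) r := Icc_subset_Icc (neg_le_neg ht) ht
  have hmvt := (convex_Icc (-|t|) |t|).norm_image_sub_le_of_norm_hasDerivWithin_le
    (f := g) (C := K * |t| ^ n) (fun x _ => (hg x).hasDerivWithinAt)
    (fun x hx => (hg' x (hsub hx)).trans <|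
      mul_le_mul_of_nonneg_left (pow_le_pow_left₀ (abs_nonneg x) (abs_le.2 hx) n) hK)
    (x := 0) (y := t) ⟨by simp, abs_nonneg t⟩ ⟨neg_abs_le t, le_abs_self t⟩
  simpa [hg0, pow_succ, mul_assoc] using hmvt

theorem abs_taylor_remainder_two_le {T : ℝ → ℝ} {x₀ r B : ℝ} (hT1 : Differentiable ℝ T)
    (hT2 : Differentiable ℝ (deriv T)) (hT3 : Differentiable ℝ (deriv (deriv T)))
    (hB : ∀ u ∈ Icc (x₀ - r) (x₀ + r), |deriv (deriv (deriv T)) u| ≤ B) {t : ℝ} (ht : |t| ≤ r) :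
    |T (x₀ + t) - T x₀ - deriv T x₀ * t - deriv (deriv T) x₀ / 2 * t ^ 2| ≤ B * |t| ^ 3 := by
  set T₁ := deriv T
  set T₂ := deriv T₁
  have hr : 0 ≤ r := (abs_nonneg t).trans ht
  have hB0 : 0 ≤ B := (abs_nonneg _).trans <| hB x₀ ⟨by linarith, by linarith⟩
  have hshift : ∀ y, HasDerivAt (fun s : ℝ => x₀ + s) 1 y := fun y => (hasDerivAt_id y).const_add x₀
  have hbound₂ : ∀ s ∈ Icc (-r) r, |T₂ (x₀ + s) - T₂ x₀| ≤ B * |s| ^ 1 := by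
    intro s hs
    refine abs_le_mul_abs_pow_succ_of_hasDerivAt (n := 0)
      (g := fun s => T₂ (x₀ + s) - T₂ x₀) (g' := fun s => deriv T₂ (x₀ + s)) hB0 ?_ (fun y => ?_)
      (fun y hy => ?_) (abs_le.2 hs)
    · simp
    · simpa using ((hT3 _).hasDerivAt.comp y (hshift y)).sub_const (T₂ x₀)
    · simpa using hB (x₀ + y) ⟨by linarith [hy.1], by linarith [hy.2]⟩
  have hbound₁ : ∀ s ∈ Icc (-r) r, |T₁ (x₀ + s) - T₁ x₀ - T₂ x₀ * s| ≤ B * |s| ^ 2 := by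
    intro s hs
    refine abs_le_mul_abs_pow_succ_of_hasDerivAt
      (g := fun s => T₁ (x₀ + s) - T₁ x₀ - T₂ x₀ * s) hB0 ?_ (fun y => ?_) hbound₂ (abs_le.2 hs)
    · simp
    · refine ((((hT2 _).hasDerivAt.comp y (hshift y)).sub_const (T₁ x₀)).sub
        ((hasDerivAt_id y).const_mul (T₂ x₀))).congr_deriv ?_
      simp [T₂]
  refine abs_le_mul_abs_pow_succ_of_hasDerivAt
    (g := fun s => T (x₀ + s) - T x₀ - T₁ x₀ * s - T₂ x₀ / 2 * s ^ 2) hB0 ?_ (fun y => ?_)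
    hbound₁ ht
  · simp
  refine (((((hT1 _).hasDerivAt.comp y (hshift y)).sub_const (T x₀)).sub
    ((hasDerivAt_id y).const_mul (T₁ x₀))).sub
    ((hasDerivAt_pow 2 y).const_mul (T₂ x₀ / 2))).congr_deriv ?_
  simp
  ring

theorem le_integral_comp_add_sub_of_taylor {α : Type*} [MeasurableSpace α] {μ : Measure α}
    [IsFiniteMeasure μ] {T : ℝ → ℝ} (hT : Continuous T) {x₀ d₁ d₂ K M : ℝ} (hK : 0 ≤ K)
    (htaylor : ∀ t, |t| ≤ M → |T (x₀ + t) - T x₀ - d₁ * t - d₂ * t ^ 2| ≤ K * |t| ^ 3)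
    {f : α → ℝ} (hf : AEStronglyMeasurable f μ) (hfM : ∀ᵐ x ∂μ, |f x| ≤ M)
    (hf0 : ∫ x, f x ∂μ = 0) :
    (d₂ - K * M) * ∫ x, f x ^ 2 ∂μ ≤ ∫ x, (T (x₀ + f x) - T x₀) ∂μ := by
  set R := fun x => T (x₀ + f x) - T x₀ - d₁ * f x - d₂ * f x ^ 2
  have hf_int : Integrable f μ := .of_bound hf M hfM
  have hf2_int : Integrable (fun x => f x ^ 2) μ := .of_bound (hf.pow 2) (M ^ 2) <| by
    filter_upwards [hfM] with x hx
    simpa using pow_le_pow_left₀ (abs_nonneg _) hx 2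
  have hR : ∀ᵐ x ∂μ, ‖R x‖ ≤ K * M * f x ^ 2 := by
    filter_upwards [hfM] with x hx
    calc ‖R x‖ ≤ K * |f x| ^ 3 := htaylor (f x) hx
      _ = K * |f x| * f x ^ 2 := by rw [← sq_abs (f x)]; ring
      _ ≤ K * M * f x ^ 2 := by gcongr
  have hR_int : Integrable R μ := (hf2_int.const_mul (K * M)).mono'
    ((((hT.comp_aestronglyMeasurable (hf.const_add x₀)).sub aestronglyMeasurable_const).sub
      (hf.const_mul d₁)).sub ((hf.pow 2).const_mul d₂)) hR
  have hsplit : ∫ x, (T (x₀ + f x) - T x₀) ∂μ = ∫ x, R x ∂μ + d₂ * ∫ x, f x ^ 2 ∂μ := by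
    calc ∫ x, (T (x₀ + f x) - T x₀) ∂μ = ∫ x, (R x + d₁ * f x + d₂ * f x ^ 2) ∂μ := by
          congr 1 with x
          ring
      _ = ∫ x, R x ∂μ + d₁ * ∫ x, f x ∂μ + d₂ * ∫ x, f x ^ 2 ∂μ := by
          rw [integral_add (f := fun x => R x + d₁ * f x) (hR_int.add (hf_int.const_mul d₁))
              (hf2_int.const_mul d₂),
            integral_add hR_int (hf_int.const_mul d₁), integral_const_mul, integral_const_mul]
      _ = ∫ x, R x ∂μ + d₂ * ∫ x, f x ^ 2 ∂μ := by rw [hf0, mul_zero, add_zero]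
  have hR_le : |∫ x, R x ∂μ| ≤ K * M * ∫ x, f x ^ 2 ∂μ := by
    simpa [integral_const_mul] using norm_integral_le_of_norm_le (hf2_int.const_mul (K * M)) hR
  linarith [(abs_le.1 hR_le).1]

theorem sq_sum_eq_sum_sq_of_mul_eq_zero {ι R : Type*} [Fintype ι] [CommSemiring R] (b : ι → R)
    (hb : ∀ i j, i ≠ j → b i * b j = 0) : (∑ i, b i) ^ 2 = ∑ i, b i ^ 2 := by
  rw [sq, Finset.sum_mul_sum]
  refine Finset.sum_congr rfl fun i _ => ?_
  rw [Finset.sum_eq_single i (fun j _ hj => hb i j hj.symm) (by simp), sq]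

theorem abs_sum_le_of_mul_eq_zero {ι : Type*} [Fintype ι] (b : ι → ℝ) {M : ℝ} (hM : 0 ≤ M)
    (hb : ∀ i j, i ≠ j → b i * b j = 0) (hbM : ∀ i, |b i| ≤ M) : |∑ i, b i| ≤ M := by
  by_cases hzero : ∀ i, b i = 0
  · simp [hzero, hM]
  obtain ⟨i, hi⟩ := not_forall.1 hzero
  rw [Finset.sum_eq_single i (fun j _ hj => (mul_eq_zero.1 (hb j i hj)).resolve_right hi)
    (by simp)]
  exact hbM i

theorem mul_comp_sub_natCast_eq_zero {h : ℝ → ℝ} (hsupp : ∀ x, x ∉ Icc (0 : ℝ) 1 → h x = 0)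
    {y : ℝ} (hy : ∀ k : ℕ, y ≠ k) {i j : ℕ} (hij : i ≠ j) : h (y - i) * h (y - j) = 0 := by
  suffices ∀ p q : ℕ, p < q → h (y - p) * h (y - q) = 0 by
    rcases hij.lt_or_gt with hlt | hlt
    · exact this i j hlt
    · rw [mul_comm]; exact this j i hlt
  intro p q hpq
  by_contra hne
  have hp := not_imp_comm.1 (hsupp (y - p)) (left_ne_zero_of_mul hne)
  have hq := not_imp_comm.1 (hsupp (y - q)) (right_ne_zero_of_mul hne)
  have : (p : ℝ) + 1 ≤ q := by exact_mod_cast hpq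
  exact hy q (by linarith [hp.2, hq.1])

theorem ae_mul_comp_mul_sub_eq_zero {h : ℝ → ℝ} (hsupp : ∀ x, x ∉ Icc (0 : ℝ) 1 → h x = 0)
    {v : ℝ} (hv : v ≠ 0) : ∀ᵐ x, ∀ i j : ℕ, i ≠ j → h (v * x - i) * h (v * x - j) = 0 := by
  have : ∀ᵐ x : ℝ, ∀ k : ℕ, v * x ≠ k := ae_all_iff.2 fun k => by
    filter_upwards [Measure.ae_ne volume (k / v)] with x hx
    contrapose! hx
    field_simp
    linarith
  filter_upwards [this] with x hx i j hij
  exact mul_comp_sub_natCast_eq_zero hsupp hx hij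

-- `h (v * · - s)` is supported in `[s / v, (s + 1) / v] ⊆ [0, 1]`, so both sides are integrals
-- over the whole line, related by an affine change of variables.
theorem integral_Icc_comp_mul_sub {h : ℝ → ℝ} (hsupp : ∀ x, x ∉ Icc (0 : ℝ) 1 → h x = 0)
    {v s : ℝ} (hv : 0 < v) (hs₀ : 0 ≤ s) (hs₁ : s + 1 ≤ v) :
    ∫ x in Icc (0 : ℝ) 1, h (v * x - s) = v⁻¹ * ∫ x in Icc (0 : ℝ) 1, h x := by
  have hcomp : ∀ x ∉ Icc (0 : ℝ) 1, h (v * x - s) = 0 := by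
    intro x hx
    refine hsupp _ fun hmem => hx ⟨?_, ?_⟩
    · nlinarith [hmem.1]
    · nlinarith [hmem.2]
  rw [setIntegral_eq_integral_of_forall_compl_eq_zero hcomp,
    setIntegral_eq_integral_of_forall_compl_eq_zero hsupp,
    Measure.integral_comp_mul_left (fun y => h (y - s)), integral_sub_right_eq_self,
    abs_of_pos (inv_pos.2 hv), smul_eq_mul]

theorem integrableOn_Icc_comp_mul_sub {g : ℝ → ℝ} (hg : Measurable g) {C : ℝ}
    (hC : ∀ x, |g x| ≤ C) (v s : ℝ) : IntegrableOn (fun x => g (v * x - s)) (Icc 0 1) :=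
  Integrable.of_bound (hg.comp (by fun_prop)).aestronglyMeasurable C (ae_of_all _ fun _ => hC _)

def bumpSum (h : ℝ → ℝ) (v : ℕ) (a : Fin v → ℝ) (ε x : ℝ) : ℝ :=
  ∑ i : Fin v, a i * ε * h (v * x - (i : ℕ))

section bumpSum

variable {h : ℝ → ℝ} {v : ℕ} {a : Fin v → ℝ} {ε : ℝ}

theorem ae_bumpSum_terms_mul_eq_zero (hsupp : ∀ x, x ∉ Icc (0 : ℝ) 1 → h x = 0) (hv : 0 < v) :
    ∀ᵐ x, ∀ i j : Fin v, i ≠ j →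
      a i * ε * h (v * x - (i : ℕ)) * (a j * ε * h (v * x - (j : ℕ))) = 0 := by
  filter_upwards [ae_mul_comp_mul_sub_eq_zero hsupp (Nat.cast_ne_zero.2 hv.ne')] with x hx i j hij
  rw [mul_mul_mul_comm, hx i j (Fin.val_ne_of_ne hij), mul_zero]

theorem ae_abs_bumpSum_le (hsupp : ∀ x, x ∉ Icc (0 : ℝ) 1 → h x = 0) {Ch : ℝ}
    (hCh : ∀ x, |h x| ≤ Ch) (hv : 0 < v) (ha : ∀ i, |a i| = 1) (hε : 0 ≤ ε) :
    ∀ᵐ x, |bumpSum h v a ε x| ≤ Ch * ε := by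
  filter_upwards [ae_bumpSum_terms_mul_eq_zero hsupp hv] with x hx
  refine abs_sum_le_of_mul_eq_zero _ (mul_nonneg ((abs_nonneg _).trans (hCh 0)) hε) hx
    fun i => ?_
  rw [abs_mul, abs_mul, ha i, one_mul, abs_of_nonneg hε, mul_comm Ch]
  exact mul_le_mul_of_nonneg_left (hCh _) hε

theorem ae_sq_bumpSum (hsupp : ∀ x, x ∉ Icc (0 : ℝ) 1 → h x = 0) (hv : 0 < v)
    (ha : ∀ i, |a i| = 1) :
    ∀ᵐ x, bumpSum h v a ε x ^ 2 = ∑ i : Fin v, ε ^ 2 * h (v * x - (i : ℕ)) ^ 2 := by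
  filter_upwards [ae_bumpSum_terms_mul_eq_zero hsupp hv] with x hx
  rw [bumpSum, sq_sum_eq_sum_sq_of_mul_eq_zero _ hx]
  refine Finset.sum_congr rfl fun i _ => ?_
  rw [mul_pow, mul_pow, ← sq_abs (a i), ha i, one_pow, one_mul]

theorem integral_bumpSum (hmeas : Measurable h) {Ch : ℝ} (hCh : ∀ x, |h x| ≤ Ch)
    (hsupp : ∀ x, x ∉ Icc (0 : ℝ) 1 → h x = 0) (hint0 : ∫ x in Icc (0 : ℝ) 1, h x = 0) :
    ∫ x in Icc (0 : ℝ) 1, bumpSum h v a ε x = 0 := by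
  simp only [bumpSum]
  rw [integral_finsetSum _ fun i _ =>
    (integrableOn_Icc_comp_mul_sub hmeas hCh _ _).const_mul _]
  refine Finset.sum_eq_zero fun i _ => ?_
  rw [integral_const_mul, integral_Icc_comp_mul_sub hsupp (by exact_mod_cast i.pos)
    (Nat.cast_nonneg _) (by exact_mod_cast i.isLt), hint0, mul_zero, mul_zero]

theorem integral_sq_bumpSum (hmeas : Measurable h) {Ch : ℝ} (hCh : ∀ x, |h x| ≤ Ch)
    (hsupp : ∀ x, x ∉ Icc (0 : ℝ) 1 → h x = 0) (hv : 0 < v) (ha : ∀ i, |a i| = 1) :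
    ∫ x in Icc (0 : ℝ) 1, bumpSum h v a ε x ^ 2 = ε ^ 2 * ∫ x in Icc (0 : ℝ) 1, h x ^ 2 := by
  have hsq_bound (x : ℝ) : |h x ^ 2| ≤ Ch ^ 2 := by
    rw [abs_pow]; exact pow_le_pow_left₀ (abs_nonneg _) (hCh x) 2
  have hsq_supp (x : ℝ) (hx : x ∉ Icc (0 : ℝ) 1) : h x ^ 2 = 0 := by simp [hsupp x hx]
  rw [integral_congr_ae (ae_restrict_of_ae (ae_sq_bumpSum hsupp hv ha)),
    integral_finsetSum _ fun i _ =>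
      (integrableOn_Icc_comp_mul_sub (hmeas.pow_const 2) hsq_bound _ _).const_mul _]
  simp_rw [integral_const_mul]
  rw [Finset.sum_congr rfl fun (i : Fin v) _ => congrArg (ε ^ 2 * ·) <|
    integral_Icc_comp_mul_sub (h := fun y => h y ^ 2) hsq_supp (by exact_mod_cast hv)
      (Nat.cast_nonneg (i : ℕ)) (by exact_mod_cast i.isLt)]
  simp only [Finset.sum_const, Finset.card_univ, Fintype.card_fin, nsmul_eq_mul]
  field_simp

end bumpSum

theorem le_integral_comp_one_add_bumpSum {T : ℝ → ℝ} {B : ℝ} (hT1 : Differentiable ℝ T)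
    (hT2 : Differentiable ℝ (deriv T)) (hT3 : Differentiable ℝ (deriv (deriv T)))
    (hT3bd : ∀ u ∈ Icc (0 : ℝ) 2, |deriv (deriv (deriv T)) u| ≤ B)
    {h : ℝ → ℝ} (hmeas : Measurable h) {Ch : ℝ} (hCh : ∀ x, |h x| ≤ Ch)
    (hsupp : ∀ x, x ∉ Icc (0 : ℝ) 1 → h x = 0) (hint0 : ∫ x in Icc (0 : ℝ) 1, h x = 0)
    {v : ℕ} (hv : 0 < v) {a : Fin v → ℝ} (ha : ∀ i, |a i| = 1) {ε : ℝ} (hε : 0 ≤ ε)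
    (hChε : Ch * ε ≤ 1) :
    (deriv (deriv T) 1 / 2 - B * (Ch * ε)) * (ε ^ 2 * ∫ x in Icc (0 : ℝ) 1, h x ^ 2) ≤
      ∫ x in Icc (0 : ℝ) 1, (T (1 + bumpSum h v a ε x) - T 1) := by
  have hB0 : 0 ≤ B := (abs_nonneg _).trans (hT3bd 1 (by norm_num))
  have htaylor (t : ℝ) (ht : |t| ≤ Ch * ε) :=
    abs_taylor_remainder_two_le (x₀ := 1) (r := 1) hT1 hT2 hT3
      (fun u hu => hT3bd u (by norm_num at hu; exact hu)) (ht.trans hChε)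
  have hmeas_sum : Measurable (bumpSum h v a ε) := by unfold bumpSum; fun_prop
  rw [← integral_sq_bumpSum hmeas hCh hsupp hv ha]
  exact le_integral_comp_add_sub_of_taylor hT1.continuous hB0 htaylor
    hmeas_sum.aestronglyMeasurable (ae_restrict_of_ae (ae_abs_bumpSum_le hsupp hCh hv ha hε))
    (integral_bumpSum hmeas hCh hsupp hint0)

/-- Separation of functional values in the lower-bound construction. -/
theorem separation_of_functional_values (T : ℝ → ℝ) (B : ℝ)
    (hT1 : Differentiable ℝ T)
    (hT2 : Differentiable ℝ (deriv T))
    (hT3 : Differentiable ℝ (deriv (deriv T)))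
    (hT3bd : ∀ u ∈ Set.Icc (0:ℝ) 2, |deriv (deriv (deriv T)) u| ≤ B)
    (hT'' : 0 < deriv (deriv T) 1)
    (h : ℝ → ℝ) (hmeas : Measurable h) (hbdd : ∃ Ch : ℝ, ∀ x : ℝ, |h x| ≤ Ch)
    (hsupp : ∀ x : ℝ, x ∉ Set.Icc (0:ℝ) 1 → h x = 0)
    (c : ℝ) (hc : 0 < c)
    (hint0 : (∫ x in Set.Icc (0:ℝ) 1, h x) = 0)
    (hint2 : (∫ x in Set.Icc (0:ℝ) 1, h x ^ 2) = c)
    (β : ℝ) (hβ : β ∈ Set.Ioo (0:ℝ) 1) :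
    ∃ CT > 0, ∃ v0 : ℕ, ∀ v : ℕ, v0 ≤ v →
      ∀ a : Fin v → ℝ, (∀ i : Fin v, a i = 1 ∨ a i = -1) →
        CT * (v : ℝ) ^ (-(2 * β)) ≤
          ∫ x in Set.Icc (0:ℝ) 1,
            (T (1 + ∑ i : Fin v, a i * (v : ℝ) ^ (-β) * h ((v : ℝ) * x - (i : ℕ))) - T 1) := by
  obtain ⟨Ch, hCh⟩ := hbdd
  set d := deriv (deriv T) 1
  have hrpow : Tendsto (fun v : ℕ => (v : ℝ) ^ (-β)) atTop (nhds 0) :=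
    (tendsto_rpow_neg_atTop hβ.1).comp tendsto_natCast_atTop_atTop
  have hsmall : ∀ᶠ v : ℕ in atTop,
      0 < v ∧ Ch * (v : ℝ) ^ (-β) ≤ 1 ∧ B * (Ch * (v : ℝ) ^ (-β)) ≤ d / 4 :=
    (eventually_gt_atTop 0).and <|
      ((hrpow.const_mul Ch).eventually (ge_mem_nhds (by simp))).and
        (((hrpow.const_mul Ch).const_mul B).eventually
          (ge_mem_nhds (by rw [mul_zero, mul_zero]; positivity)))
  obtain ⟨v0, hv0⟩ := eventually_atTop.1 hsmall
  refine ⟨c * d / 4, by positivity, v0, fun v hv a ha => ?_⟩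
  obtain ⟨hvpos, hChε, hBε⟩ := hv0 v hv
  set ε := (v : ℝ) ^ (-β)
  have hε2 : (v : ℝ) ^ (-(2 * β)) = ε ^ 2 := by
    rw [sq, ← Real.rpow_add (by exact_mod_cast hvpos)]
    ring_nf
  have hlower := le_integral_comp_one_add_bumpSum hT1 hT2 hT3 hT3bd hmeas hCh hsupp hint0 hvpos
    (a := a) (ε := ε) (fun i => by rcases ha i with hai | hai <;> simp [hai]) (by positivity) hChε
  rw [hint2] at hlower
  calc c * d / 4 * (v : ℝ) ^ (-(2 * β)) = d / 4 * (ε ^ 2 * c) := by rw [hε2]; ring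
    _ ≤ (d / 2 - B * (Ch * ε)) * (ε ^ 2 * c) := by gcongr; linarith
    _ ≤ _ := hlower
end
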